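/- If the formal power series v in the expansion α(x) = −2/x + (1/3)log(±x) + v(x) of the regular Abel function of h(x) = e^x − 1 had positive radius of convergence, then j(x) = 1/α'(x) would be a convergent power series; combined with Écalle's criterion this would make all regular iterates h^{[t]} convergent, contradicting Baker's theorem that h^{[t]} converges only for integer t. Hence v has radius of convergence 0. -/

import Mathlib

/-!
If `v` converges, so does `g = 2 + x/3 + x² v'`, and as `g(0) = 2 ≠ 0` the relation `j g = x²`
forces `j` to converge. Dividing by a convergent series `a` with `a₀ ≠ 0` preserves convergence:
a geometric bound on the coefficients propagates through the recursion
`a₀ uₙ = bₙ - ∑_{k ≥ 1} aₖ u_{n-k}` once the radius is shrunk so far that the tail of `a` is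
small against `a₀`. Écalle's criterion then makes the regular half-iterate of `eˣ - 1` converge,
contradicting Baker's theorem.
-/

open PowerSeries

/-- A formal power series over `ℝ` has positive radius of convergence. -/
def HasPosRadius (f : PowerSeries ℝ) : Prop :=
  ∃ r : ℝ, 0 < r ∧ Summable fun n : ℕ => |coeff n f| * r ^ n

/-- Composition `g ∘ f` of formal power series (intended for `f` with zero constant term). -/
noncomputable def PowerSeries.comp' (g f : PowerSeries ℝ) : PowerSeries ℝ :=
  PowerSeries.mk fun n => ∑ k ∈ Finset.range (n + 1), (coeff k g) * coeff n (f ^ k)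

/-- The power series of `h x = exp x - 1`. -/
noncomputable def expSubOne : PowerSeries ℝ :=
  PowerSeries.mk fun n => if n = 0 then 0 else ((Nat.factorial n : ℝ))⁻¹

/-- `F` is a regular `t`-th iterate of `h x = exp x - 1`:
`F = X + t·(1/2)·X² + ⋯` and `F` commutes with `h` under composition. -/
noncomputable def IsRegIterExp (t : ℝ) (F : PowerSeries ℝ) : Prop :=
  coeff 0 F = 0 ∧ coeff 1 F = 1 ∧ coeff 2 F = t * (1/2) ∧
  PowerSeries.comp' F expSubOne = PowerSeries.comp' expSubOne F

open Finset

theorem hasPosRadius_iff_exists_bound {f : PowerSeries ℝ} :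
    HasPosRadius f ↔ ∃ r, 0 < r ∧ ∃ C, ∀ n, |coeff n f| * r ^ n ≤ C := by
  constructor
  · rintro ⟨r, hr, hsum⟩
    exact ⟨r, hr, _, fun n => hsum.le_tsum n fun m _ => by positivity⟩
  · rintro ⟨r, hr, C, hC⟩
    refine ⟨r / 2, by positivity, (summable_geometric_two.mul_left C).of_nonneg_of_le
      (fun n => by positivity) fun n => ?_⟩
    calc |coeff n f| * (r / 2) ^ n = |coeff n f| * r ^ n * (1 / 2) ^ n := by ring
      _ ≤ C * (1 / 2) ^ n := by gcongr; exact hC n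

theorem summable_abs_coeff_mul_pow_of_le {f : PowerSeries ℝ} {r s : ℝ}
    (hf : Summable fun n => |coeff n f| * r ^ n) (hs : 0 ≤ s) (hsr : s ≤ r) :
    Summable fun n => |coeff n f| * s ^ n :=
  hf.of_nonneg_of_le (fun n => by positivity) fun n => by gcongr

theorem hasPosRadius_C (c : ℝ) : HasPosRadius (C c) :=
  hasPosRadius_iff_exists_bound.2
    ⟨1, one_pos, |c|, fun n => by rw [coeff_C]; split_ifs <;> simp⟩

theorem hasPosRadius_X : HasPosRadius (X : PowerSeries ℝ) :=
  hasPosRadius_iff_exists_bound.2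
    ⟨1, one_pos, 1, fun n => by rw [coeff_X]; split_ifs <;> simp⟩

theorem HasPosRadius.add {f g : PowerSeries ℝ} (hf : HasPosRadius f) (hg : HasPosRadius g) :
    HasPosRadius (f + g) := by
  obtain ⟨r, hr, hfr⟩ := hf
  obtain ⟨s, hs, hgs⟩ := hg
  have hft := summable_abs_coeff_mul_pow_of_le hfr (by positivity) (min_le_left r s)
  have hgt := summable_abs_coeff_mul_pow_of_le hgs (by positivity) (min_le_right r s)
  refine ⟨min r s, lt_min hr hs, (hft.add hgt).of_nonneg_of_le (fun n => by positivity)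
    fun n => ?_⟩
  rw [map_add, ← add_mul]
  gcongr
  exact abs_add_le _ _

theorem HasPosRadius.mul {f g : PowerSeries ℝ} (hf : HasPosRadius f) (hg : HasPosRadius g) :
    HasPosRadius (f * g) := by
  obtain ⟨r, hr, hfr⟩ := hf
  obtain ⟨s, hs, hgs⟩ := hg
  set t := min r s
  have ht : 0 < t := lt_min hr hs
  have hft := summable_abs_coeff_mul_pow_of_le hfr ht.le (min_le_left r s)
  have hgt := summable_abs_coeff_mul_pow_of_le hgs ht.le (min_le_right r s)
  refine ⟨t, ht, ?_⟩
  convert summable_norm_sum_mul_antidiagonal_of_summable_norm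
    (f := fun n => coeff n f * t ^ n) (g := fun n => coeff n g * t ^ n)
    (by simpa [abs_mul, abs_of_pos ht] using hft) (by simpa [abs_mul, abs_of_pos ht] using hgt)
    using 1
  funext n
  have hsum : ∑ p ∈ antidiagonal n, coeff p.1 f * t ^ p.1 * (coeff p.2 g * t ^ p.2)
      = coeff n (f * g) * t ^ n := by
    rw [coeff_mul, sum_mul]
    refine sum_congr rfl fun p hp => ?_
    rw [← mem_antidiagonal.mp hp, pow_add]
    ring
  rw [hsum, Real.norm_eq_abs, abs_mul, abs_of_pos (pow_pos ht n)]

theorem HasPosRadius.pow {f : PowerSeries ℝ} (hf : HasPosRadius f) :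
    ∀ n : ℕ, HasPosRadius (f ^ n)
  | 0 => by simpa using hasPosRadius_C 1
  | n + 1 => by rw [pow_succ]; exact (hf.pow n).mul hf

theorem HasPosRadius.derivative {f : PowerSeries ℝ} (hf : HasPosRadius f) :
    HasPosRadius (d⁄dX ℝ f) := by
  obtain ⟨r, hr, C, hC⟩ := hasPosRadius_iff_exists_bound.1 hf
  refine hasPosRadius_iff_exists_bound.2 ⟨r / 2, by positivity, C / r, fun n => ?_⟩
  have hn : (n + 1 : ℝ) ≤ 2 ^ n := by exact_mod_cast Nat.lt_two_pow_self
  calc |coeff n (d⁄dX ℝ f)| * (r / 2) ^ n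
      = (n + 1) / 2 ^ n * (|coeff (n + 1) f| * r ^ (n + 1)) / r := by
        rw [coeff_derivative, abs_mul, abs_of_pos (by positivity : (0 : ℝ) < n + 1), div_pow]
        field_simp
        ring
    _ ≤ 1 * C / r := by
        gcongr
        · exact (div_le_one (by positivity)).2 hn
        · exact hC _
    _ = C / r := by rw [one_mul]

theorem sum_antidiagonal_half_pow_le (m : ℕ) :
    ∑ p ∈ antidiagonal m, (1 / 2 : ℝ) ^ p.2 ≤ 2 := by
  rw [← Nat.sum_antidiagonal_swap, Nat.sum_antidiagonal_eq_sum_range_succ_mk]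
  simpa using sum_geometric_two_le (m + 1)

theorem abs_sum_antidiagonal_mul_succ_le {u a : ℕ → ℝ} {m : ℕ} {ρ q A K : ℝ} (hρ : 0 ≤ ρ)
    (hq0 : 0 ≤ q) (hq : q ≤ 1 / 2) (hA : ∀ k, |a k| * ρ ^ k ≤ A)
    (hu : ∀ i ≤ m, |u i| * (q * ρ) ^ i ≤ K) :
    |∑ p ∈ antidiagonal m, u p.1 * a (p.2 + 1)| * (q * ρ) ^ (m + 1) ≤ 2 * q * A * K := by
  have hK : 0 ≤ K := (by positivity : (0 : ℝ) ≤ |u 0| * (q * ρ) ^ 0).trans (hu 0 m.zero_le)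
  have hA0 : 0 ≤ A := (by positivity : (0 : ℝ) ≤ |a 0| * ρ ^ 0).trans (hA 0)
  calc |∑ p ∈ antidiagonal m, u p.1 * a (p.2 + 1)| * (q * ρ) ^ (m + 1)
      ≤ (∑ p ∈ antidiagonal m, |u p.1| * |a (p.2 + 1)|) * (q * ρ) ^ (m + 1) := by
        gcongr
        exact (abs_sum_le_sum_abs _ _).trans_eq (sum_congr rfl fun p _ => abs_mul _ _)
    _ = ∑ p ∈ antidiagonal m,
          |u p.1| * (q * ρ) ^ p.1 * (|a (p.2 + 1)| * ρ ^ (p.2 + 1) * (q * q ^ p.2)) := by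
        rw [sum_mul]
        refine sum_congr rfl fun p hp => ?_
        rw [← mem_antidiagonal.mp hp]
        ring
    _ ≤ ∑ p ∈ antidiagonal m, K * (A * (q * (1 / 2) ^ p.2)) := by
        gcongr with p hp
        · exact hu _ (by have := mem_antidiagonal.mp hp; omega)
        · exact hA _
    _ = q * A * K * ∑ p ∈ antidiagonal m, (1 / 2 : ℝ) ^ p.2 := by
        rw [mul_sum]
        exact sum_congr rfl fun p _ => by ring
    _ ≤ 2 * q * A * K := by
        nlinarith [sum_antidiagonal_half_pow_le m, mul_nonneg (mul_nonneg hq0 hA0) hK]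

theorem abs_coeff_mul_pow_le_of_mul_eq {u a b : PowerSeries ℝ} {ρ q A B K : ℝ}
    (h : u * a = b) (ha0 : coeff 0 a ≠ 0) (hρ : 0 ≤ ρ) (hq0 : 0 ≤ q) (hq : q ≤ 1 / 2)
    (hA : ∀ k, |coeff k a| * ρ ^ k ≤ A) (hB : ∀ k, |coeff k b| * ρ ^ k ≤ B) (hK0 : 0 ≤ K)
    (hK : B + 2 * q * A * K ≤ |coeff 0 a| * K) (n : ℕ) :
    |coeff n u| * (q * ρ) ^ n ≤ K := by
  induction n using Nat.strong_induction_on with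
  | _ n ih =>
  suffices hstep : |coeff 0 a| * (|coeff n u| * (q * ρ) ^ n) ≤ B + 2 * q * A * K from
    le_of_mul_le_mul_left (hstep.trans hK) (abs_pos.2 ha0)
  have hn := congrArg (coeff n) h
  cases n with
  | zero =>
    have hA0 : 0 ≤ A := (by positivity : (0 : ℝ) ≤ |coeff 0 a| * ρ ^ 0).trans (hA 0)
    simp only [coeff_mul, Nat.antidiagonal_zero, sum_singleton] at hn
    calc |coeff 0 a| * (|coeff 0 u| * (q * ρ) ^ 0) = |coeff 0 b| * ρ ^ 0 := by
          rw [← hn, abs_mul]; ring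
      _ ≤ B := hB 0
      _ ≤ B + 2 * q * A * K := le_add_of_nonneg_right (by positivity)
  | succ m =>
    rw [coeff_mul, Nat.sum_antidiagonal_succ', ← eq_sub_iff_add_eq] at hn
    dsimp only at hn
    have hb : |coeff (m + 1) b| * (q * ρ) ^ (m + 1) ≤ B :=
      le_trans (by gcongr; exact mul_le_of_le_one_left hρ (by linarith)) (hB _)
    have hsum := abs_sum_antidiagonal_mul_succ_le (u := fun i => coeff i u)
      (a := fun k => coeff k a) (m := m) hρ hq0 hq hA (fun i hi => ih i (by omega))
    calc |coeff 0 a| * (|coeff (m + 1) u| * (q * ρ) ^ (m + 1))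
        = |coeff (m + 1) b - ∑ p ∈ antidiagonal m, coeff p.1 u * coeff (p.2 + 1) a|
            * (q * ρ) ^ (m + 1) := by
          rw [← hn, abs_mul]; ring
      _ ≤ (|coeff (m + 1) b| + |∑ p ∈ antidiagonal m, coeff p.1 u * coeff (p.2 + 1) a|)
            * (q * ρ) ^ (m + 1) := by gcongr; exact abs_sub _ _
      _ ≤ B + 2 * q * A * K := by rw [add_mul]; exact add_le_add hb hsum

theorem HasPosRadius.of_mul_eq {u a b : PowerSeries ℝ} (ha : HasPosRadius a)
    (ha0 : coeff 0 a ≠ 0) (hb : HasPosRadius b) (h : u * a = b) : HasPosRadius u := by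
  obtain ⟨r, hr, A, hA⟩ := hasPosRadius_iff_exists_bound.1 ha
  obtain ⟨s, hs, B, hB⟩ := hasPosRadius_iff_exists_bound.1 hb
  set ρ := min r s
  have hAρ : ∀ k, |coeff k a| * ρ ^ k ≤ A := fun k =>
    le_trans (by gcongr; exact min_le_left r s) (hA k)
  have hBρ : ∀ k, |coeff k b| * ρ ^ k ≤ B := fun k =>
    le_trans (by gcongr; exact min_le_right r s) (hB k)
  set c := |coeff 0 a|
  have hc : 0 < c := abs_pos.2 ha0
  have hA0 : 0 < A := hc.trans_le (by simpa only [pow_zero, mul_one] using hAρ 0)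
  have hB0 : 0 ≤ B := (by positivity : (0 : ℝ) ≤ |coeff 0 b| * ρ ^ 0).trans (hBρ 0)
  set q := min (1 / 2) (c / (4 * A))
  have hq0 : 0 < q := lt_min (by norm_num) (by positivity)
  have hqA : 4 * A * q ≤ c := by
    have := min_le_right (1 / 2) (c / (4 * A))
    rw [le_div_iff₀ (by positivity)] at this
    linarith
  set K := 2 * B / c
  have hK0 : 0 ≤ K := by positivity
  have hcK : c * K = 2 * B := by simp only [K]; field_simp
  refine hasPosRadius_iff_exists_bound.2 ⟨q * ρ, mul_pos hq0 (lt_min hr hs), K,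
    abs_coeff_mul_pow_le_of_mul_eq h ha0 (lt_min hr hs).le hq0.le (min_le_left _ _) hAρ hBρ hK0
      ?_⟩
  nlinarith

/-- The series `v` in the expansion `α x = -2/x + (1/3)·log (±x) + v x` of the regular Abel
function of `h x = exp x - 1` has zero radius of convergence.  Here the relation between `v`
and the iterative logarithm `j` of `h` is `j · (2 + x/3 + x²·v') = x²` (i.e. `α' = 1/j`);
Baker's theorem (`h^[t]` converges only for integer `t`), Écalle's criterion (if `j` converges
then all regular iterates converge), and the formal existence of regular iterates are taken
as hypotheses. -/
theorem abel_series_v_diverges (j v : PowerSeries ℝ)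
    (hjv : j * (PowerSeries.C (R := ℝ) 2 + PowerSeries.C (R := ℝ) (1/3) * PowerSeries.X
        + PowerSeries.X ^ 2 * PowerSeries.mk fun n : ℕ => (n + 1 : ℝ) * coeff (n + 1) v)
      = PowerSeries.X ^ 2)
    (hEcalle : HasPosRadius j → ∀ t : ℝ, ∀ F : PowerSeries ℝ,
      IsRegIterExp t F → HasPosRadius F)
    (hBaker : ∀ t : ℝ, (∃ F : PowerSeries ℝ, IsRegIterExp t F ∧ HasPosRadius F) →
      ∃ k : ℤ, t = (k : ℝ))
    (hExists : ∀ t : ℝ, ∃ F : PowerSeries ℝ, IsRegIterExp t F) :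
    ¬ HasPosRadius v := by
  intro hv
  have hderiv : (PowerSeries.mk fun n : ℕ => (n + 1 : ℝ) * coeff (n + 1) v) = d⁄dX ℝ v := by
    ext n
    rw [coeff_mk, coeff_derivative, mul_comm]
  have hj : HasPosRadius j := by
    refine HasPosRadius.of_mul_eq ?_ ?_ (hasPosRadius_X.pow 2) hjv
    · rw [hderiv]
      exact ((hasPosRadius_C 2).add ((hasPosRadius_C _).mul hasPosRadius_X)).add
        ((hasPosRadius_X.pow 2).mul hv.derivative)
    · simp
  obtain ⟨F, hF⟩ := hExists (1 / 2)
  obtain ⟨k, hk⟩ := hBaker (1 / 2) ⟨F, hF, hEcalle hj (1 / 2) F hF⟩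
  have h2k : 2 * k = 1 := by exact_mod_cast (by linarith : (2 * k : ℝ) = 1)
  omega
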